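/- Let p_t(x,y) (t > 0, x, y ∈ ℝⁿ) be measurable kernels satisfying the Gaussian upper bound |p_t(x,y)| ≤ C t^{−n/2} e^{−c|x−y|²/t} and the conservation property ∫_{ℝⁿ} p_t(x,y) dy = 1 for every t > 0 and almost every x. Then there is a constant c′ > 0, depending only on n, C and c, such that for every f ∈ BMO(ℝⁿ): for every ball B = B(x,r) the integral ∫_{ℝⁿ} p_{r²}(y,z) f(z) dz converges absolutely for a.e. y ∈ B, and sup_{x∈ℝⁿ, r>0} (1/|B(x,r)|) ∫_{B(x,r)} | f(y) − ∫_{ℝⁿ} p_{r²}(y,z) f(z) dz | dy ≤ c′ ‖f‖_{BMO}. -/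

import Mathlib

open MeasureTheory ENNReal Real Set

noncomputable section

/-- `ℝⁿ` with the Euclidean norm. -/
abbrev En (n : ℕ) := EuclideanSpace ℝ (Fin n)

/-- Axis-parallel cube with lower corner `a` and side length `l`. -/
def cube {n : ℕ} (a : En n) (l : ℝ) : Set (En n) :=
  {x | ∀ i, x i ∈ Set.Icc (a i) (a i + l)}

/-- The classical BMO seminorm (as an extended real number):
`sup_Q (1/|Q|) ∫_Q |f - f_Q|`, supremum over all axis-parallel cubes. -/
def bmoNorm {n : ℕ} (f : En n → ℝ) : ℝ≥0∞ :=
  ⨆ (a : En n) (l : ℝ) (_ : 0 < l),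
    (∫⁻ x in cube a l, ENNReal.ofReal |f x - ⨍ y in cube a l, f y|) / volume (cube a l)

end

/-!
Fix a ball `B(x, r)`, let `t = r²` and let `c₀` be the mean of `f` over the cube `Q₀` of
half-side `2r` about `x`, which contains the ball. Since `∫ p_t(y, ·) = 1`,
`f y - P_t f y = (f y - c₀) - ∫ p_t(y, z) (f z - c₀) dz`. The first term has mean at most
`‖f‖_BMO · |Q₀| / |B|` over the ball. For the second, cover `ℝⁿ` by the cubes `Q_k` of half-side
`2^(k+1) r` about `x`: a point first met in `Q_k` is at distance at least `(2^k - 1) r` from `y`,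
so there the kernel is at most `C r⁻ⁿ exp (-c (2^k - 1)²)`, whereas comparing means over
`Q₀ ⊆ Q_k` gives `∫_{Q_k} |f - c₀| ≤ 2 · 4ⁿ · 4^(kn) rⁿ ‖f‖_BMO`. The Gaussian factor beats this
growth, so the integral converges absolutely and is bounded by a multiple of `‖f‖_BMO`.
-/

open Metric

lemma ofReal_abs_setAverage_sub_mul_le {α : Type*} [MeasurableSpace α] {μ : Measure α}
    {s : Set α} {f : α → ℝ} (hs : μ s ≠ ∞) (hf : IntegrableOn f s μ) (d : ℝ) :
    ENNReal.ofReal |(⨍ x in s, f x ∂μ) - d| * μ s ≤ ∫⁻ x in s, ENNReal.ofReal |f x - d| ∂μ := by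
  have hmean : ∫ x in s, (f x - d) ∂μ = μ.real s * ((⨍ x in s, f x ∂μ) - d) := by
    rw [integral_sub hf (integrableOn_const hs), setIntegral_const, setAverage_eq, smul_eq_mul,
      smul_eq_mul, mul_sub]
    rcases eq_or_ne (μ.real s) 0 with h0 | h0
    · simp [h0, Measure.restrict_eq_zero.2 ((measureReal_eq_zero_iff hs).1 h0)]
    · rw [mul_inv_cancel_left₀ h0]
  calc ENNReal.ofReal |(⨍ x in s, f x ∂μ) - d| * μ s
      = ‖∫ x in s, (f x - d) ∂μ‖ₑ := by
        rw [hmean, Real.enorm_eq_ofReal_abs, abs_mul, ENNReal.ofReal_mul (abs_nonneg _),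
          abs_of_nonneg measureReal_nonneg, measureReal_def, ENNReal.ofReal_toReal hs, mul_comm]
    _ ≤ ∫⁻ x in s, ENNReal.ofReal |f x - d| ∂μ := by
        simpa only [Real.enorm_eq_ofReal_abs] using
          enorm_integral_le_lintegral_enorm (fun x => f x - d)

lemma lintegral_mul_le_tsum_mul_setLIntegral {α : Type*} [MeasurableSpace α] {μ : Measure α}
    {s : ℕ → Set α} (hs : ∀ k, MeasurableSet (s k)) {φ g : α → ℝ≥0∞} (hg : AEMeasurable g μ)
    {a : ℕ → ℝ≥0∞} (h : ∀ z, ∃ k, z ∈ s k ∧ φ z ≤ a k) :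
    ∫⁻ z, φ z * g z ∂μ ≤ ∑' k, a k * ∫⁻ z in s k, g z ∂μ :=
  calc ∫⁻ z, φ z * g z ∂μ ≤ ∫⁻ z, ∑' k, a k * (s k).indicator g z ∂μ := by
        refine lintegral_mono fun z => ?_
        obtain ⟨k, hk, hφ⟩ := h z
        refine le_trans ?_ (ENNReal.le_tsum k)
        rw [indicator_of_mem hk]
        gcongr
    _ = ∑' k, a k * ∫⁻ z in s k, g z ∂μ := by
        rw [lintegral_tsum fun k => (hg.indicator (hs k)).const_mul _]
        refine tsum_congr fun k => ?_
        rw [lintegral_const_mul'' _ (hg.indicator (hs k)), lintegral_indicator (hs k)]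

lemma integrable_mul_and_ofReal_abs_sub_integral_mul_le {α : Type*} [MeasurableSpace α]
    {μ : Measure α} {k g : α → ℝ} (hk : ∫ z, k z ∂μ = 1) (hkm : AEStronglyMeasurable k μ)
    (hgm : AEStronglyMeasurable g μ) {c₀ : ℝ} {B : ℝ≥0∞}
    (hB : ∫⁻ z, ENNReal.ofReal |k z| * ENNReal.ofReal |g z - c₀| ∂μ ≤ B) (hB_top : B ≠ ∞)
    (w : ℝ) :
    Integrable (fun z => k z * g z) μ ∧
      ENNReal.ofReal |w - ∫ z, k z * g z ∂μ| ≤ ENNReal.ofReal |w - c₀| + B := by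
  have henorm : ∫⁻ z, ‖k z * (g z - c₀)‖ₑ ∂μ ≤ B := by
    simpa only [Real.enorm_eq_ofReal_abs, abs_mul, ENNReal.ofReal_mul (abs_nonneg _)] using hB
  have hkg₀ : Integrable (fun z => k z * (g z - c₀)) μ :=
    ⟨hkm.mul (hgm.sub aestronglyMeasurable_const), henorm.trans_lt hB_top.lt_top⟩
  -- a non-integrable function has Bochner integral `0`, not `1`
  have hk_int : Integrable k μ := Integrable.of_integral_ne_zero (by simp [hk])
  have hkg : Integrable (fun z => k z * g z) μ :=
    (hkg₀.add (hk_int.mul_const c₀)).congr (.of_forall fun z => by simp only [Pi.add_apply]; ring)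
  have hshift : ∫ z, k z * g z ∂μ = c₀ + ∫ z, k z * (g z - c₀) ∂μ := by
    simp only [mul_sub, integral_sub hkg (hk_int.mul_const c₀), integral_mul_const, hk]
    ring
  refine ⟨hkg, ?_⟩
  calc ENNReal.ofReal |w - ∫ z, k z * g z ∂μ|
      ≤ ENNReal.ofReal (|w - c₀| + ‖∫ z, k z * (g z - c₀) ∂μ‖) := by
        rw [hshift, ← sub_sub, Real.norm_eq_abs]
        exact ENNReal.ofReal_le_ofReal (abs_sub _ _)
    _ = ENNReal.ofReal |w - c₀| + ‖∫ z, k z * (g z - c₀) ∂μ‖ₑ := by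
        rw [ENNReal.ofReal_add (abs_nonneg _) (norm_nonneg _), ofReal_norm]
    _ ≤ ENNReal.ofReal |w - c₀| + B := by
        gcongr
        exact (enorm_integral_le_lintegral_enorm _).trans henorm

lemma sq_rpow_neg_div_two (n : ℕ) {r : ℝ} (hr : 0 ≤ r) : (r ^ 2) ^ (-(n : ℝ) / 2) = (r ^ n)⁻¹ := by
  rw [← Real.rpow_natCast r 2, ← rpow_mul hr, show ((2 : ℕ) : ℝ) * (-(n : ℝ) / 2) = -(n : ℝ) by
    push_cast; ring, rpow_neg hr, Real.rpow_natCast]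

section Cube

variable {n : ℕ}

lemma cube_eq_preimage (a : En n) (l : ℝ) :
    cube a l = WithLp.ofLp ⁻¹' univ.pi fun i => Icc (a i) (a i + l) := by
  ext x
  simp only [mem_preimage, mem_univ_pi]
  rfl

lemma isCompact_cube (a : En n) (l : ℝ) : IsCompact (cube a l) := by
  rw [cube_eq_preimage]
  exact (PiLp.homeomorph 2 _).isCompact_preimage.2 (isCompact_univ_pi fun _ => isCompact_Icc)

lemma measurableSet_cube (a : En n) (l : ℝ) : MeasurableSet (cube a l) :=
  (isCompact_cube a l).isClosed.measurableSet

lemma volume_cube (a : En n) (l : ℝ) : volume (cube a l) = ENNReal.ofReal l ^ n := by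
  rw [cube_eq_preimage, (PiLp.volume_preserving_ofLp (Fin n)).measure_preimage
    (MeasurableSet.univ_pi fun _ => measurableSet_Icc).nullMeasurableSet]
  simp only [volume_pi_pi, Real.volume_Icc, add_sub_cancel_left, Finset.prod_const,
    Finset.card_univ, Fintype.card_fin]

end Cube

section BMO

variable {n : ℕ} {f : En n → ℝ} {a a' : En n} {l l' : ℝ}

lemma volume_cube_ne_zero (a : En n) (hl : 0 < l) : volume (cube a l) ≠ 0 := by
  simp [volume_cube, hl]

lemma volume_cube_ne_top (a : En n) (l : ℝ) : volume (cube a l) ≠ ∞ :=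
  (isCompact_cube a l).measure_lt_top.ne

lemma setLIntegral_abs_sub_average_cube_le (f : En n → ℝ) (a : En n) (hl : 0 < l) :
    ∫⁻ x in cube a l, ENNReal.ofReal |f x - ⨍ y in cube a l, f y| ≤
      bmoNorm f * volume (cube a l) :=
  (ENNReal.div_le_iff_le_mul (.inl (volume_cube_ne_zero a hl)) (.inl (volume_cube_ne_top a l))).1
    (le_iSup_of_le a <| le_iSup_of_le l <| le_iSup_of_le hl le_rfl)

lemma ofReal_abs_average_sub_average_cube_le (hf : IntegrableOn f (cube a l)) (hl' : 0 < l')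
    (hsub : cube a l ⊆ cube a' l') :
    ENNReal.ofReal |(⨍ y in cube a l, f y) - ⨍ y in cube a' l', f y| * volume (cube a l) ≤
      bmoNorm f * volume (cube a' l') :=
  calc _ ≤ ∫⁻ x in cube a l, ENNReal.ofReal |f x - ⨍ y in cube a' l', f y| :=
        ofReal_abs_setAverage_sub_mul_le (volume_cube_ne_top a l) hf _
    _ ≤ ∫⁻ x in cube a' l', ENNReal.ofReal |f x - ⨍ y in cube a' l', f y| :=
        lintegral_mono_set hsub
    _ ≤ bmoNorm f * volume (cube a' l') := setLIntegral_abs_sub_average_cube_le f a' hl'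

/-- Crude, but the Gaussian decay of the kernel absorbs the growth in `l'`. -/
lemma setLIntegral_abs_sub_average_cube_le_of_subset (hf : IntegrableOn f (cube a l))
    (hl : 0 < l) (hl' : 0 < l') (hsub : cube a l ⊆ cube a' l') :
    ∫⁻ x in cube a' l', ENNReal.ofReal |f x - ⨍ y in cube a l, f y| ≤
      bmoNorm f * ENNReal.ofReal (l' ^ n * (1 + (l' / l) ^ n)) := by
  set c₀ := ⨍ y in cube a l, f y
  set d := ⨍ y in cube a' l', f y
  have hvol : volume (cube a' l') / volume (cube a l) = ENNReal.ofReal ((l' / l) ^ n) := by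
    rw [volume_cube, volume_cube, ← ENNReal.ofReal_pow hl.le, ← ENNReal.ofReal_pow hl'.le,
      ← ENNReal.ofReal_div_of_pos (by positivity), div_pow]
  have hjump : ENNReal.ofReal |d - c₀| ≤ bmoNorm f * ENNReal.ofReal ((l' / l) ^ n) := by
    rw [← hvol, ← mul_div_assoc, ENNReal.le_div_iff_mul_le (.inl (volume_cube_ne_zero a hl))
      (.inl (volume_cube_ne_top a l)), abs_sub_comm]
    exact ofReal_abs_average_sub_average_cube_le hf hl' hsub
  calc ∫⁻ x in cube a' l', ENNReal.ofReal |f x - c₀|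
      ≤ ∫⁻ x in cube a' l', (ENNReal.ofReal |f x - d| + ENNReal.ofReal |d - c₀|) := by
        refine lintegral_mono fun x => ?_
        rw [← ENNReal.ofReal_add (abs_nonneg _) (abs_nonneg _)]
        exact ENNReal.ofReal_le_ofReal (abs_sub_le _ _ _)
    _ = (∫⁻ x in cube a' l', ENNReal.ofReal |f x - d|) +
          ENNReal.ofReal |d - c₀| * volume (cube a' l') := by
        rw [lintegral_add_right _ measurable_const, setLIntegral_const]
    _ ≤ bmoNorm f * volume (cube a' l') +
          bmoNorm f * ENNReal.ofReal ((l' / l) ^ n) * volume (cube a' l') := by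
        gcongr
        exact setLIntegral_abs_sub_average_cube_le f a' hl'
    _ = bmoNorm f * ENNReal.ofReal (l' ^ n * (1 + (l' / l) ^ n)) := by
        rw [volume_cube, ← ENNReal.ofReal_pow hl'.le, ENNReal.ofReal_mul (by positivity),
          ENNReal.ofReal_add zero_le_one (by positivity), ENNReal.ofReal_one]
        ring

end BMO

section CenteredCube

variable {n : ℕ}

def centeredCube (x : En n) (s : ℝ) : Set (En n) :=
  cube (WithLp.toLp 2 fun i => x i - s) (2 * s)

variable {x y z : En n} {s s' : ℝ}

lemma mem_centeredCube : z ∈ centeredCube x s ↔ ∀ i, |z i - x i| ≤ s := by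
  simp only [centeredCube, cube, mem_ofPred_eq, mem_Icc, abs_le]
  refine forall_congr' fun i => ?_
  constructor <;> rintro ⟨h₁, h₂⟩ <;> constructor <;> linarith

lemma centeredCube_subset_centeredCube (h : s ≤ s') : centeredCube x s ⊆ centeredCube x s' :=
  fun _ hz => mem_centeredCube.2 fun i => (mem_centeredCube.1 hz i).trans h

lemma ball_subset_centeredCube (x : En n) (r : ℝ) : ball x r ⊆ centeredCube x r :=
  fun z hz => mem_centeredCube.2 fun i => by
    simpa only [Real.dist_eq] using (PiLp.dist_apply_le z x i).trans (mem_ball.1 hz).le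

lemma sub_dist_lt_dist_of_notMem_centeredCube (hz : z ∉ centeredCube x s) :
    s - dist y x < dist y z := by
  obtain ⟨i, hi⟩ := not_forall.1 (mt mem_centeredCube.2 hz)
  have hzy : |z i - x i| ≤ dist z y + dist y x := by
    simpa only [← Real.dist_eq] using (dist_triangle _ _ _).trans
      (add_le_add (PiLp.dist_apply_le z y i) (PiLp.dist_apply_le y x i))
  rw [dist_comm y z]
  linarith [not_le.1 hi]

end CenteredCube

lemma exists_mem_centeredCube_two_pow_and_le_dist {n : ℕ} {x y : En n} {r : ℝ} (hr : 0 < r)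
    (hy : y ∈ ball x r) (z : En n) :
    ∃ k : ℕ, z ∈ centeredCube x (2 ^ (k + 1) * r) ∧ (2 ^ k - 1) * r ≤ dist y z := by
  obtain ⟨m, hm⟩ := pow_unbounded_of_one_lt (dist z x / r) one_lt_two
  have hzm : z ∈ centeredCube x (2 ^ (m + 1) * r) := by
    refine ball_subset_centeredCube x _ (mem_ball.2 ?_)
    rw [div_lt_iff₀ hr] at hm
    exact hm.trans_le (by gcongr <;> norm_num)
  clear hm
  induction m with
  | zero => exact ⟨0, hzm, by simp⟩
  | succ m ih =>
    by_cases hz : z ∈ centeredCube x (2 ^ (m + 1) * r)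
    · exact ih hz
    · refine ⟨m + 1, hzm, ?_⟩
      linarith [sub_dist_lt_dist_of_notMem_centeredCube (y := y) hz, mem_ball.1 hy]

lemma summable_exp_neg_mul_two_pow_sub_one_sq_mul (n : ℕ) {c : ℝ} (hc : 0 < c) :
    Summable fun k : ℕ => exp (-c * (2 ^ k - 1) ^ 2) * ((2 : ℝ) ^ k) ^ (2 * n) := by
  have hsum := ((summable_pow_mul_exp_neg_nat_mul (2 * n) hc).comp_injective
    (Nat.pow_right_injective le_rfl)).mul_left (exp c)
  refine hsum.of_nonneg_of_le (fun k => by positivity) fun k => ?_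
  have hsq : (2 ^ k - 1 : ℝ) ≤ (2 ^ k - 1) ^ 2 := by
    have := Nat.le_self_pow two_ne_zero (2 ^ k - 1)
    rwa [← Nat.cast_le (α := ℝ), Nat.cast_pow, Nat.cast_sub Nat.one_le_two_pow, Nat.cast_pow,
      Nat.cast_ofNat, Nat.cast_one] at this
  simp only [Function.comp_apply, Nat.cast_pow, Nat.cast_ofNat]
  rw [mul_comm (_ ^ _), ← mul_assoc, ← exp_add]
  gcongr
  nlinarith

noncomputable def dyadicGaussSum (n : ℕ) (c : ℝ) : ℝ :=
  ∑' k : ℕ, exp (-c * (2 ^ k - 1) ^ 2) * ((2 : ℝ) ^ k) ^ (2 * n)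

lemma dyadicGaussSum_nonneg (n : ℕ) (c : ℝ) : 0 ≤ dyadicGaussSum n c :=
  tsum_nonneg fun _ => by positivity

lemma toReal_volume_ball_zero_one_pos (n : ℕ) : 0 < (volume (ball (0 : En n) 1)).toReal :=
  ENNReal.toReal_pos (measure_ball_pos _ _ one_pos).ne' measure_ball_lt_top.ne

noncomputable def gaussianBMOConst (n : ℕ) (C c : ℝ) : ℝ :=
  4 ^ n / (volume (ball (0 : En n) 1)).toReal + 2 * 4 ^ n * C * dyadicGaussSum n c

lemma gaussianBMOConst_pos (n : ℕ) {C : ℝ} (hC : 0 ≤ C) (c : ℝ) : 0 < gaussianBMOConst n C c := by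
  have := toReal_volume_ball_zero_one_pos n
  have := dyadicGaussSum_nonneg n c
  unfold gaussianBMOConst
  positivity

section Kernel

variable {n : ℕ} {C c r : ℝ} {K : En n → En n → ℝ} {f : En n → ℝ} {x y z : En n}

lemma volume_centeredCube_two_mul (x : En n) (hr : 0 < r) :
    volume (centeredCube x (2 * r)) =
      ENNReal.ofReal (4 ^ n / (volume (ball (0 : En n) 1)).toReal) * volume (ball x r) := by
  have hω := toReal_volume_ball_zero_one_pos n
  set ω := (volume (ball (0 : En n) 1)).toReal
  rw [centeredCube, volume_cube, Measure.addHaar_ball_of_pos _ _ hr, finrank_euclideanSpace_fin,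
    ← ENNReal.ofReal_toReal measure_ball_lt_top.ne, ← ENNReal.ofReal_pow (by positivity),
    ← ENNReal.ofReal_mul (by positivity), ← ENNReal.ofReal_mul (by positivity)]
  congr 1
  field_simp
  ring

lemma setLIntegral_abs_sub_average_centeredCube_le (hf : LocallyIntegrable f volume)
    (hr : 0 < r) (k : ℕ) :
    ∫⁻ z in centeredCube x (2 ^ (k + 1) * r),
        ENNReal.ofReal |f z - ⨍ w in centeredCube x (2 * r), f w| ≤
      bmoNorm f * ENNReal.ofReal (2 * 4 ^ n * ((2 : ℝ) ^ k) ^ (2 * n) * r ^ n) := by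
  refine (setLIntegral_abs_sub_average_cube_le_of_subset
    (hf.integrableOn_isCompact (isCompact_cube _ _)) (by positivity) (by positivity)
    (centeredCube_subset_centeredCube ?_)).trans ?_
  · exact mul_le_mul_of_nonneg_right (le_self_pow₀ one_le_two k.succ_ne_zero) hr.le
  refine mul_le_mul_right (ENNReal.ofReal_le_ofReal ?_) _
  have hratio : 2 * (2 ^ (k + 1) * r) / (2 * (2 * r)) = (2 : ℝ) ^ k := by
    field_simp
    ring
  have hm : (1 : ℝ) ≤ (2 ^ k) ^ n := one_le_pow₀ (one_le_pow₀ one_le_two)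
  calc (2 * (2 ^ (k + 1) * r)) ^ n * (1 + (2 * (2 ^ (k + 1) * r) / (2 * (2 * r))) ^ n)
      ≤ (2 * (2 ^ (k + 1) * r)) ^ n * (2 * (2 ^ k) ^ n) := by rw [hratio]; gcongr; linarith
    _ = 2 * 4 ^ n * ((2 : ℝ) ^ k) ^ (2 * n) * r ^ n := by
        rw [show (4 : ℝ) = 2 * 2 by norm_num]
        ring

lemma abs_kernel_le_of_two_pow_sub_one_mul_le_dist (hC : 0 ≤ C) (hc : 0 ≤ c) (hr : 0 < r)
    (hK : ∀ y z, |K y z| ≤ C * (r ^ n)⁻¹ * exp (-c * ‖y - z‖ ^ 2 / r ^ 2)) {k : ℕ}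
    (h : (2 ^ k - 1) * r ≤ dist y z) :
    |K y z| ≤ C * (r ^ n)⁻¹ * exp (-c * (2 ^ k - 1) ^ 2) := by
  have hk : (0 : ℝ) ≤ 2 ^ k - 1 := sub_nonneg.2 (one_le_pow₀ one_le_two)
  have hsq : ((2 ^ k - 1) * r) ^ 2 ≤ ‖y - z‖ ^ 2 := by
    rw [← dist_eq_norm]
    gcongr
  refine (hK y z).trans ?_
  gcongr
  rw [neg_mul, neg_mul, neg_div, neg_le_neg_iff, le_div_iff₀ (by positivity), mul_assoc,
    ← mul_pow]
  gcongr

lemma lintegral_abs_kernel_mul_abs_sub_average_le (hC : 0 ≤ C) (hc : 0 < c) (hr : 0 < r)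
    (hK : ∀ y z, |K y z| ≤ C * (r ^ n)⁻¹ * exp (-c * ‖y - z‖ ^ 2 / r ^ 2))
    (hf : LocallyIntegrable f volume) (hy : y ∈ ball x r) :
    ∫⁻ z, ENNReal.ofReal |K y z| * ENNReal.ofReal |f z - ⨍ w in centeredCube x (2 * r), f w| ≤
      ENNReal.ofReal (2 * 4 ^ n * C * dyadicGaussSum n c) * bmoNorm f := by
  set c₀ := ⨍ w in centeredCube x (2 * r), f w
  have hg : AEMeasurable (fun z => ENNReal.ofReal |f z - c₀|) :=
    (hf.aestronglyMeasurable.aemeasurable.sub_const c₀).abs.ennreal_ofReal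
  calc ∫⁻ z, ENNReal.ofReal |K y z| * ENNReal.ofReal |f z - c₀|
      ≤ ∑' k : ℕ, ENNReal.ofReal (C * (r ^ n)⁻¹ * exp (-c * (2 ^ k - 1) ^ 2)) *
          ∫⁻ z in centeredCube x (2 ^ (k + 1) * r), ENNReal.ofReal |f z - c₀| := by
        refine lintegral_mul_le_tsum_mul_setLIntegral (fun k => measurableSet_cube _ _) hg
          fun z => ?_
        obtain ⟨k, hzk, hdist⟩ := exists_mem_centeredCube_two_pow_and_le_dist hr hy z
        exact ⟨k, hzk, ENNReal.ofReal_le_ofReal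
          (abs_kernel_le_of_two_pow_sub_one_mul_le_dist hC hc.le hr hK hdist)⟩
    _ ≤ ∑' k : ℕ, ENNReal.ofReal (2 * 4 ^ n * C *
          (exp (-c * (2 ^ k - 1) ^ 2) * ((2 : ℝ) ^ k) ^ (2 * n))) * bmoNorm f := by
        refine ENNReal.tsum_le_tsum fun k => ?_
        grw [setLIntegral_abs_sub_average_centeredCube_le hf hr k]
        rw [mul_left_comm, ← ENNReal.ofReal_mul (by positivity), mul_comm]
        refine le_of_eq ?_
        congr 2
        field_simp
    _ = ENNReal.ofReal (2 * 4 ^ n * C * dyadicGaussSum n c) * bmoNorm f := by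
        rw [ENNReal.tsum_mul_right, ← ENNReal.ofReal_tsum_of_nonneg (fun k => by positivity)
          ((summable_exp_neg_mul_two_pow_sub_one_sq_mul n hc).mul_left _), tsum_mul_left,
          dyadicGaussSum]

theorem ae_integrable_and_setLIntegral_abs_sub_integral_kernel_le (hC : 0 ≤ C) (hc : 0 < c)
    (hr : 0 < r) (hK_meas : Measurable (Function.uncurry K))
    (hK : ∀ y z, |K y z| ≤ C * (r ^ n)⁻¹ * exp (-c * ‖y - z‖ ^ 2 / r ^ 2))
    (hK_one : ∀ᵐ y, ∫ z, K y z = 1) (hf : LocallyIntegrable f volume) (hbmo : bmoNorm f ≠ ∞)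
    (x : En n) :
    (∀ᵐ y ∂volume.restrict (ball x r), Integrable (fun z => K y z * f z)) ∧
      ∫⁻ y in ball x r, ENNReal.ofReal |f y - ∫ z, K y z * f z| ≤
        ENNReal.ofReal (gaussianBMOConst n C c) * bmoNorm f * volume (ball x r) := by
  set c₀ := ⨍ w in centeredCube x (2 * r), f w
  set A := 2 * 4 ^ n * C * dyadicGaussSum n c
  have hpt : ∀ᵐ y ∂volume.restrict (ball x r), Integrable (fun z => K y z * f z) ∧
      ENNReal.ofReal |f y - ∫ z, K y z * f z| ≤
        ENNReal.ofReal |f y - c₀| + ENNReal.ofReal A * bmoNorm f := by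
    filter_upwards [ae_restrict_mem measurableSet_ball, ae_restrict_of_ae hK_one] with y hy hy_one
    exact integrable_mul_and_ofReal_abs_sub_integral_mul_le hy_one
      hK_meas.of_uncurry_left.aestronglyMeasurable hf.aestronglyMeasurable
      (lintegral_abs_kernel_mul_abs_sub_average_le hC hc hr hK hf hy)
      (ENNReal.mul_ne_top ENNReal.ofReal_ne_top hbmo) (f y)
  refine ⟨hpt.mono fun y hy => hy.1, ?_⟩
  have hA : 0 ≤ A := by have := dyadicGaussSum_nonneg n c; positivity
  calc ∫⁻ y in ball x r, ENNReal.ofReal |f y - ∫ z, K y z * f z|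
      ≤ ∫⁻ y in ball x r, (ENNReal.ofReal |f y - c₀| + ENNReal.ofReal A * bmoNorm f) :=
        lintegral_mono_ae (hpt.mono fun y hy => hy.2)
    _ = (∫⁻ y in ball x r, ENNReal.ofReal |f y - c₀|) +
          ENNReal.ofReal A * bmoNorm f * volume (ball x r) := by
        rw [lintegral_add_right _ measurable_const, setLIntegral_const]
    _ ≤ bmoNorm f * volume (centeredCube x (2 * r)) +
          ENNReal.ofReal A * bmoNorm f * volume (ball x r) := by
        gcongr
        calc (∫⁻ y in ball x r, ENNReal.ofReal |f y - c₀|)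
            ≤ ∫⁻ y in centeredCube x (2 * r), ENNReal.ofReal |f y - c₀| :=
              lintegral_mono_set ((ball_subset_centeredCube x r).trans
                (centeredCube_subset_centeredCube (by linarith)))
          _ ≤ bmoNorm f * volume (centeredCube x (2 * r)) :=
              setLIntegral_abs_sub_average_cube_le f _ (by positivity)
    _ = ENNReal.ofReal (gaussianBMOConst n C c) * bmoNorm f * volume (ball x r) := by
        rw [volume_centeredCube_two_mul x hr, gaussianBMOConst,
          ENNReal.ofReal_add (by positivity) hA]
        ring

end Kernel

/-- a conservative semigroup with Gaussian kernel bounds maps each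
`BMO` function to a well-defined function, and the associated `BMO_L` seminorm is
controlled by the classical BMO seminorm. -/
theorem stmt10 (n : ℕ) (C c : ℝ) (hC : 0 < C) (hc : 0 < c) :
    ∃ c' : ℝ, 0 < c' ∧
      ∀ p : ℝ → En n → En n → ℝ,
        (∀ t : ℝ, Measurable (Function.uncurry (p t))) →
        (∀ t : ℝ, 0 < t → ∀ x y : En n,
          |p t x y| ≤ C * t ^ (-(n : ℝ) / 2) * Real.exp (-c * ‖x - y‖ ^ 2 / t)) →
        (∀ t : ℝ, 0 < t → ∀ᵐ x : En n ∂volume, (∫ y : En n, p t x y) = 1) →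
        ∀ f : En n → ℝ, LocallyIntegrable f volume → bmoNorm f < ⊤ →
          (∀ (x : En n) (r : ℝ), 0 < r →
            ∀ᵐ y ∂(volume.restrict (Metric.ball x r)),
              Integrable (fun z => p (r ^ 2) y z * f z) volume) ∧
          (⨆ (x : En n) (r : ℝ) (_ : 0 < r),
              (∫⁻ y in Metric.ball x r,
                ENNReal.ofReal |f y - ∫ z : En n, p (r ^ 2) y z * f z|) /
                volume (Metric.ball x r))
            ≤ ENNReal.ofReal c' * bmoNorm f := by
  refine ⟨gaussianBMOConst n C c, gaussianBMOConst_pos n hC.le c,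
    fun p hmeas hgauss hcons f hf hbmo => ?_⟩
  have hball (x : En n) {r : ℝ} (hr : 0 < r) :=
    ae_integrable_and_setLIntegral_abs_sub_integral_kernel_le hC.le hc hr (hmeas (r ^ 2))
      (by rw [← sq_rpow_neg_div_two n hr.le]; exact hgauss (r ^ 2) (by positivity))
      (hcons (r ^ 2) (by positivity)) hf hbmo.ne x
  exact ⟨fun x r hr => (hball x hr).1, iSup_le fun x => iSup₂_le fun r hr =>
    ENNReal.div_le_of_le_mul (hball x hr).2⟩
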